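/- Bi-orthogonality of complex Hermite functions: for a complex frequency E_θ = E e^{iθ} with E > 0 and |θ| < π/2 (so Re(E_θ) > 0), the functions f_m(q) = (√(E_θ)/(2^m m! √(2π)))^{1/2} e^{-E_θ q²/4} H_m(√(E_θ/2) q) satisfy ∫_ℝ f_n(q) f_m(q) dq = δ_{nm}. -/

import Mathlib

/-!
Write `f_n f_m` as a constant times `H_n(a q) H_m(a q) e^{-a² q²}` with `a² = E_θ / 2`.
Integration by parts, valid because `Re a² > 0`, shows that the functional
`L(P) = ∫ P(a q) e^{-a² q²} dq` on polynomials kills `P' - 2 X P`. With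
`H_{n+1} = 2 X H_n - H_n'` and `H_{m+1}' = 2 (m + 1) H_m` this gives
`L(H_{n+1} H_m) = L(H_n H_m')`, hence `L(H_n H_m) = δ_{nm} 2^n n! (π / a²)^{1/2}` by induction
from the complex Gaussian integral `L(1) = (π / a²)^{1/2}`. The normalisation constants cancel
because `√E_θ · √(2π / E_θ) = √(2π)` for principal square roots when `arg E_θ ≠ π`.
-/

open MeasureTheory Complex

/-- The physicists' Hermite polynomials, characterized by the Rodrigues formula
`H_m(z) = (-1)^m e^{z²} (d/dz)^m e^{-z²}`, equivalently the recursion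
`H_0 = 1`, `H_{m+1}(z) = 2 z H_m(z) - H_m'(z)`. -/
noncomputable def hermiteH : ℕ → ℂ → ℂ
  | 0 => fun _ => 1
  | (m + 1) => fun z => 2 * z * hermiteH m z - deriv (hermiteH m) z

/-- The complex harmonic oscillator wavefunction of frequency `E_θ = E e^{iθ}`:
`f_m(q) = (√(E_θ)/(2^m m! √(2π)))^{1/2} e^{-E_θ q²/4} H_m(√(E_θ/2) q)`,
with principal branches of the square roots. -/
noncomputable def complexHermiteFun (E θ : ℝ) (m : ℕ) (q : ℝ) : ℂ :=
  ((((E : ℂ) * Complex.exp (Complex.I * θ)) ^ ((1 : ℂ) / 2)) /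
      ((2 : ℂ) ^ m * (Nat.factorial m : ℂ) * (Real.sqrt (2 * Real.pi) : ℂ))) ^ ((1 : ℂ) / 2) *
    Complex.exp (-((E : ℂ) * Complex.exp (Complex.I * θ)) * (q : ℂ) ^ 2 / 4) *
    hermiteH m ((((E : ℂ) * Complex.exp (Complex.I * θ)) / 2) ^ ((1 : ℂ) / 2) * q)

open Polynomial

noncomputable def physHermite : ℕ → ℂ[X]
  | 0 => 1
  | (m + 1) => 2 * X * physHermite m - derivative (physHermite m)

@[simp] lemma physHermite_zero : physHermite 0 = 1 := rfl

lemma physHermite_succ (m : ℕ) :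
    physHermite (m + 1) = 2 * X * physHermite m - derivative (physHermite m) := rfl

lemma hermiteH_eq_eval_physHermite (m : ℕ) : hermiteH m = fun z => (physHermite m).eval z := by
  induction m with
  | zero => funext z; simp [hermiteH]
  | succ m ih =>
    funext z
    simp [hermiteH, physHermite_succ, ih, Polynomial.deriv]

lemma derivative_physHermite_succ (m : ℕ) :
    derivative (physHermite (m + 1)) = C (2 * (m + 1) : ℂ) * physHermite m := by
  induction m with
  | zero => simp [physHermite_succ, ← C_ofNat]
  | succ m ih =>
    have ih' := congrArg derivative ih
    rw [derivative_C_mul] at ih'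
    rw [physHermite_succ (m + 1), derivative_sub, derivative_mul, ih', ih]
    simp only [physHermite_succ m, derivative_mul, derivative_X, derivative_ofNat, map_add,
      map_mul, map_natCast, map_ofNat, map_one, Nat.cast_add, Nat.cast_one]
    ring

lemma cpow_one_half_sq (z : ℂ) : (z ^ (1 / 2 : ℂ)) ^ 2 = z := by
  rw [one_div, cpow_ofNat_inv_pow]

lemma ofReal_mul_cpow {r : ℝ} (hr : 0 < r) {w : ℂ} (hw : w ≠ 0) (s : ℂ) :
    ((r : ℂ) * w) ^ s = (r : ℂ) ^ s * w ^ s := by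
  have hr' : (r : ℂ) ≠ 0 := ofReal_ne_zero.2 hr.ne'
  rw [cpow_def_of_ne_zero (mul_ne_zero hr' hw), log_ofReal_mul hr hw, add_mul, exp_add,
    ofReal_log hr.le, ← cpow_def_of_ne_zero hr', ← cpow_def_of_ne_zero hw]

lemma cpow_mul_ofReal_div_cpow {z : ℂ} (hz : z ≠ 0) (harg : z.arg ≠ Real.pi) {r : ℝ} (hr : 0 < r)
    (s : ℂ) : z ^ s * ((r : ℂ) / z) ^ s = (r : ℂ) ^ s := by
  have hzs : z ^ s ≠ 0 := by simp [cpow_eq_zero_iff, hz]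
  rw [div_eq_mul_inv, ofReal_mul_cpow hr (inv_ne_zero hz), inv_cpow _ _ harg, mul_left_comm,
    mul_inv_cancel₀ hzs, mul_one]

lemma ofReal_mul_cexp_I_mul_re_pos {E θ : ℝ} (hE : 0 < E) (hθ : |θ| < Real.pi / 2) :
    0 < ((E : ℂ) * cexp (I * θ)).re := by
  rw [mul_comm I, re_ofReal_mul, exp_ofReal_mul_I_re]
  exact mul_pos hE (Real.cos_pos_of_mem_Ioo (abs_lt.1 hθ))

lemma integrable_ofReal_pow_mul_cexp_neg_mul_sq {b : ℂ} (hb : 0 < b.re) (k : ℕ) :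
    Integrable fun x : ℝ => (x : ℂ) ^ k * cexp (-b * (x : ℂ) ^ 2) := by
  have hreal : Integrable fun x : ℝ => x ^ (k : ℝ) * Real.exp (-b.re * x ^ 2) :=
    integrable_rpow_mul_exp_neg_mul_sq hb (by linarith [k.cast_nonneg (α := ℝ)])
  refine hreal.norm.mono' (by fun_prop) (Filter.Eventually.of_forall fun x => ?_)
  rw [norm_mul, norm_mul, norm_cexp_neg_mul_sq, norm_pow, norm_real, Real.rpow_natCast, norm_pow,
    Real.norm_of_nonneg (Real.exp_pos _).le]

lemma integrable_eval_mul_cexp_neg_mul_sq {b : ℂ} (hb : 0 < b.re) (a : ℂ) (P : ℂ[X]) :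
    Integrable fun x : ℝ => P.eval (a * x) * cexp (-b * (x : ℂ) ^ 2) := by
  simp only [eval_eq_sum_range, Finset.sum_mul, mul_pow, mul_assoc]
  exact integrable_finsetSum _ fun i _ =>
    ((integrable_ofReal_pow_mul_cexp_neg_mul_sq hb i).const_mul _).const_mul _

noncomputable def gaussianFunctional (a : ℂ) (P : ℂ[X]) : ℂ :=
  ∫ x : ℝ, P.eval (a * x) * cexp (-a ^ 2 * (x : ℂ) ^ 2)

lemma gaussianFunctional_C_mul (a k : ℂ) (P : ℂ[X]) :
    gaussianFunctional a (C k * P) = k * gaussianFunctional a P := by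
  simp only [gaussianFunctional, eval_mul, eval_C, mul_assoc, integral_const_mul]

lemma hasDerivAt_eval_mul_cexp_neg_mul_sq (a : ℂ) (P : ℂ[X]) (x : ℝ) :
    HasDerivAt (fun x : ℝ => P.eval (a * x) * cexp (-a ^ 2 * (x : ℂ) ^ 2))
      (a * ((derivative P - 2 * X * P).eval (a * x) * cexp (-a ^ 2 * (x : ℂ) ^ 2))) x := by
  have hP : HasDerivAt (fun z : ℂ => P.eval (a * z)) ((derivative P).eval (a * x) * a) x := by
    have hlin : HasDerivAt (fun z : ℂ => a * z) a x := by
      simpa using (hasDerivAt_id (x : ℂ)).const_mul a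
    exact (P.hasDerivAt (a * x)).comp (x : ℂ) hlin
  have hG : HasDerivAt (fun z : ℂ => cexp (-a ^ 2 * z ^ 2))
      (cexp (-a ^ 2 * (x : ℂ) ^ 2) * (-a ^ 2 * (2 * (x : ℂ) ^ 1))) x :=
    ((hasDerivAt_pow 2 (x : ℂ)).const_mul _).cexp
  refine (hP.mul hG).comp_ofReal.congr_deriv ?_
  simp only [eval_sub, eval_mul, eval_ofNat, eval_X]
  ring

section

variable {a : ℂ} (ha : 0 < (a ^ 2).re)
include ha

lemma gaussianFunctional_sub (P Q : ℂ[X]) :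
    gaussianFunctional a (P - Q) = gaussianFunctional a P - gaussianFunctional a Q := by
  simp only [gaussianFunctional, eval_sub, sub_mul]
  exact integral_sub (integrable_eval_mul_cexp_neg_mul_sq ha a P)
    (integrable_eval_mul_cexp_neg_mul_sq ha a Q)

lemma gaussianFunctional_one : gaussianFunctional a 1 = (Real.pi / a ^ 2) ^ (1 / 2 : ℂ) := by
  simpa [gaussianFunctional] using integral_gaussian_complex ha

lemma gaussianFunctional_derivative_sub_two_X_mul (P : ℂ[X]) :
    gaussianFunctional a (derivative P - 2 * X * P) = 0 := by
  have ha0 : a ≠ 0 := by rintro rfl; simp at ha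
  have h := integral_eq_zero_of_hasDerivAt_of_integrable
    (hasDerivAt_eval_mul_cexp_neg_mul_sq a P)
    ((integrable_eval_mul_cexp_neg_mul_sq ha a _).const_mul a)
    (integrable_eval_mul_cexp_neg_mul_sq ha a P)
  rwa [integral_const_mul, mul_eq_zero, or_iff_right ha0] at h

lemma gaussianFunctional_physHermite_succ_mul (n m : ℕ) :
    gaussianFunctional a (physHermite (n + 1) * physHermite m)
      = gaussianFunctional a (physHermite n * derivative (physHermite m)) := by
  rw [eq_comm, ← sub_eq_zero, ← gaussianFunctional_sub ha]
  convert gaussianFunctional_derivative_sub_two_X_mul ha (physHermite n * physHermite m) using 2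
  rw [physHermite_succ, derivative_mul]
  ring

lemma gaussianFunctional_physHermite_mul_physHermite (n m : ℕ) :
    gaussianFunctional a (physHermite n * physHermite m)
      = if n = m then 2 ^ n * n.factorial * (Real.pi / a ^ 2) ^ (1 / 2 : ℂ) else 0 := by
  induction n generalizing m with
  | zero =>
    cases m with
    | zero => simp [gaussianFunctional_one ha]
    | succ m =>
      rw [mul_comm, gaussianFunctional_physHermite_succ_mul ha]
      simp [gaussianFunctional]
  | succ n ih =>
    cases m with
    | zero =>
      rw [gaussianFunctional_physHermite_succ_mul ha]
      simp [gaussianFunctional]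
    | succ m =>
      rw [gaussianFunctional_physHermite_succ_mul ha, derivative_physHermite_succ, mul_left_comm,
        gaussianFunctional_C_mul, ih]
      by_cases h : n = m
      · subst h
        simp only [if_true, Nat.factorial_succ]
        push_cast
        ring
      · simp [h]

end

noncomputable def hermiteNormSq (z : ℂ) (m : ℕ) : ℂ :=
  z ^ ((1 : ℂ) / 2) / ((2 : ℂ) ^ m * (Nat.factorial m : ℂ) * (Real.sqrt (2 * Real.pi) : ℂ))

lemma hermiteNormSq_mul_gaussianFunctional_self {z a : ℂ} (hz : 0 < z.re) (ha : a ^ 2 = z / 2)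
    (n : ℕ) : hermiteNormSq z n * gaussianFunctional a (physHermite n * physHermite n) = 1 := by
  have ha' : 0 < (a ^ 2).re := by rw [ha, div_ofNat_re]; positivity
  have hz0 : z ≠ 0 := by rintro rfl; simp at hz
  have hzarg : z.arg ≠ Real.pi := fun h => (arg_eq_pi_iff.1 h).1.not_gt hz
  have hroot : z ^ (1 / 2 : ℂ) * (Real.pi / a ^ 2) ^ (1 / 2 : ℂ) = (√(2 * Real.pi) : ℝ) := by
    rw [ha, show (Real.pi : ℂ) / (z / 2) = ((2 * Real.pi : ℝ) : ℂ) / z by push_cast; field_simp,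
      cpow_mul_ofReal_div_cpow hz0 hzarg (by positivity), Real.sqrt_eq_rpow,
      ofReal_cpow (by positivity)]
    norm_num
  have hD : (2 ^ n * n.factorial * (√(2 * Real.pi) : ℝ) : ℂ) ≠ 0 :=
    mul_ne_zero (by simp [Nat.factorial_ne_zero]) (ofReal_ne_zero.2 (by positivity))
  rw [gaussianFunctional_physHermite_mul_physHermite ha', if_pos rfl, hermiteNormSq,
    div_mul_eq_mul_div, div_eq_one_iff_eq hD]
  linear_combination (2 ^ n * n.factorial : ℂ) * hroot

/-- Bi-orthogonality of the complex Hermite functions: for `E > 0` and `|θ| < π/2`,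
`∫_ℝ f_n(q) f_m(q) dq = δ_{nm}` (no complex conjugation). -/
theorem complexHermiteFun_biorthogonal (E θ : ℝ) (hE : 0 < E) (hθ : |θ| < Real.pi / 2)
    (n m : ℕ) :
    (∫ q : ℝ, complexHermiteFun E θ n q * complexHermiteFun E θ m q)
      = if n = m then 1 else 0 := by
  set ε : ℂ := E * cexp (I * θ)
  have hε : 0 < ε.re := ofReal_mul_cexp_I_mul_re_pos hE hθ
  set a : ℂ := (ε / 2) ^ (1 / 2 : ℂ)
  have ha : a ^ 2 = ε / 2 := cpow_one_half_sq _
  have ha' : 0 < (a ^ 2).re := by rw [ha, div_ofNat_re]; positivity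
  have hprod (q : ℝ) : complexHermiteFun E θ n q * complexHermiteFun E θ m q
      = hermiteNormSq ε n ^ (1 / 2 : ℂ) * hermiteNormSq ε m ^ (1 / 2 : ℂ)
        * ((physHermite n * physHermite m).eval (a * q) * cexp (-a ^ 2 * (q : ℂ) ^ 2)) := by
    have hexp : cexp (-ε * (q : ℂ) ^ 2 / 4) * cexp (-ε * (q : ℂ) ^ 2 / 4)
        = cexp (-a ^ 2 * (q : ℂ) ^ 2) := by
      rw [← exp_add, ha]; ring_nf
    simp only [complexHermiteFun, hermiteNormSq, hermiteH_eq_eval_physHermite, eval_mul, ← hexp]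
    ring
  simp only [hprod]
  rw [integral_const_mul, ← gaussianFunctional]
  split_ifs with h
  · rw [h, ← sq, cpow_one_half_sq]
    exact hermiteNormSq_mul_gaussianFunctional_self hε ha m
  · rw [gaussianFunctional_physHermite_mul_physHermite ha', if_neg h, mul_zero]
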